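/- arXiv:1801.08353 — 2 statements merged into one kernel-verified Lean document; each statement's English description precedes it below -/
import Mathlib

section
/- Let p be a prime with p > 2, let σ be a positive natural number, and let x, y : Fin σ → ZMod p be functions whose values are all 0 or 1 (bit representations of two σ-bit strings). Define c ∈ ZMod p by starting with c = 0 and, for each i from 0 to σ-1, setting c' = x i + y i - 2*(x i)*(y i) and then c ← c + c' - c*c' (Algorithm 1). Then the final value c is 0 or 1, and c = 0 if and only if x = y (i.e., x i = y i for all i). -/
private lemma fold_inv (p : ℕ) (hp : p.Prime) (σ : ℕ) (x y : Fin σ → ZMod p)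
    (hx : ∀ i, x i = 0 ∨ x i = 1) (hy : ∀ i, y i = 0 ∨ y i = 1)
    (l : List (Fin σ)) : ∀ c : ZMod p, (c = 0 ∨ c = 1) →
    ((l.foldl (fun c i =>
        c + (x i + y i - 2 * x i * y i) - c * (x i + y i - 2 * x i * y i)) c = 0 ∨
      l.foldl (fun c i =>
        c + (x i + y i - 2 * x i * y i) - c * (x i + y i - 2 * x i * y i)) c = 1) ∧
    (l.foldl (fun c i =>
        c + (x i + y i - 2 * x i * y i) - c * (x i + y i - 2 * x i * y i)) c = 0 ↔
      c = 0 ∧ ∀ i ∈ l, x i = y i)) := by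
  haveI := Fact.mk hp
  induction l with
  | nil => intro c hc; simp; tauto
  | cons a t ih =>
    intro c hc
    have hx' := hx a; have hy' := hy a
    set c' : ZMod p := x a + y a - 2 * x a * y a with hc'
    have hcases : (c' = 0 ∧ x a = y a) ∨ (c' = 1 ∧ x a ≠ y a) := by
      rcases hx' with h1 | h1 <;> rcases hy' with h2 | h2 <;>
        simp [hc', h1, h2] <;> ring_nf <;> simp
    have hstep : c + c' - c * c' = 0 ∨ c + c' - c * c' = 1 := by
      rcases hc with h | h <;> rcases hcases with ⟨h', _⟩ | ⟨h', _⟩ <;>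
        simp [h, h']
    have hstep0 : (c + c' - c * c' = 0) ↔ (c = 0 ∧ x a = y a) := by
      rcases hc with h | h <;> rcases hcases with ⟨h', h''⟩ | ⟨h', h''⟩ <;>
        simp [h, h', h'', one_ne_zero]
    obtain ⟨H1, H2⟩ := ih (c + c' - c * c') hstep
    refine ⟨H1, ?_⟩
    rw [List.foldl_cons] at *
    rw [H2, hstep0]
    simp only [List.mem_cons]
    constructor
    · rintro ⟨⟨hc0, hxa⟩, ht⟩
      exact ⟨hc0, fun i hi => by rcases hi with rfl | hi; exact hxa; exact ht i hi⟩
    · rintro ⟨hc0, ht⟩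
      exact ⟨⟨hc0, ht a (Or.inl rfl)⟩, fun i hi => ht i (Or.inr hi)⟩

theorem generic_equality_test_correct (p : ℕ) (hp : p.Prime) (hp2 : 2 < p)
    (σ : ℕ) (hσ : 0 < σ) (x y : Fin σ → ZMod p)
    (hx : ∀ i, x i = 0 ∨ x i = 1) (hy : ∀ i, y i = 0 ∨ y i = 1) :
    ((List.finRange σ).foldl
        (fun c i =>
          c + (x i + y i - 2 * x i * y i) - c * (x i + y i - 2 * x i * y i)) 0 = 0 ∨
      (List.finRange σ).foldl
        (fun c i =>
          c + (x i + y i - 2 * x i * y i) - c * (x i + y i - 2 * x i * y i)) 0 = 1) ∧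
    ((List.finRange σ).foldl
        (fun c i =>
          c + (x i + y i - 2 * x i * y i) - c * (x i + y i - 2 * x i * y i)) 0 = 0 ↔
      x = y) := by
  obtain ⟨H1, H2⟩ := fold_inv p hp σ x y hx hy (List.finRange σ) 0 (Or.inl rfl)
  refine ⟨H1, H2.trans ?_⟩
  simp [funext_iff, List.mem_finRange]
end

section
/- Let p be a prime with p > 2, let I be a finite index set of smart meters, let Ns and σ be positive natural numbers, let s : I → Fin Ns assign to each meter its contracted supplier, and let β : Fin Ns → (Fin σ → ZMod p) be an injective bit-encoding of supplier identities whose values are all 0 or 1. Let E : I → ZMod p be the meters' electricity data. For each meter i and supplier u, let c(i,u) ∈ ZMod p be 1 minus the output of the equality-test circuit of Algorithm 1 applied to the bit strings β(s i) and β(u) (so that c(i,u) indicates equality). Then for every supplier u, the NAA accumulation ∑_{i ∈ I} c(i,u) * E i equals ∑_{i ∈ I, s i = u} E i, the aggregate data of the meters contracted to supplier u. -/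
/-- The equality-test circuit of Algorithm 1: on bits, `acc + x - acc * x` is OR and
`a + b - 2 * a * b` is XOR. -/
def equalityCircuit {R : Type*} [CommRing R] {σ : ℕ} (a b : Fin σ → R) : R :=
  (List.finRange σ).foldl
    (fun acc k => acc + (a k + b k - 2 * a k * b k) - acc * (a k + b k - 2 * a k * b k)) 0

-- `1 - (acc + x - acc * x) = (1 - acc) * (1 - x)`: negated, the OR-fold becomes a product.
theorem one_sub_foldl_or {R ι : Type*} [CommRing R] (x : ι → R) (L : List ι) (acc : R) :
    1 - L.foldl (fun acc k => acc + x k - acc * x k) acc =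
      (1 - acc) * (L.map fun k => 1 - x k).prod := by
  induction L generalizing acc with
  | nil => simp
  | cons k L ih => rw [List.foldl_cons, ih, List.map_cons, List.prod_cons]; ring

theorem one_sub_xor_of_bits {R : Type*} [CommRing R] [DecidableEq R] {a b : R}
    (ha : a = 0 ∨ a = 1) (hb : b = 0 ∨ b = 1) :
    1 - (a + b - 2 * a * b) = if a = b then 1 else 0 := by
  split_ifs with h
  · subst h; rcases ha with rfl | rfl <;> ring
  · rcases ha with rfl | rfl <;> rcases hb with rfl | rfl <;> first | exact absurd rfl h | ring

theorem one_sub_equalityCircuit {R : Type*} [CommRing R] [DecidableEq R] {σ : ℕ}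
    {a b : Fin σ → R}
    (ha : ∀ k, a k = 0 ∨ a k = 1) (hb : ∀ k, b k = 0 ∨ b k = 1) :
    1 - equalityCircuit a b = if a = b then 1 else 0 := by
  rw [equalityCircuit, one_sub_foldl_or (fun k => a k + b k - 2 * a k * b k), sub_zero, one_mul,
    ← Fin.prod_univ_def]
  simp only [one_sub_xor_of_bits (ha _) (hb _), Finset.prod_boole, Finset.mem_univ, true_implies,
    funext_iff]

theorem naa_aggregation_correct_general (p : ℕ)
    (I : Type*) [Fintype I] (Ns σ : ℕ)
    (s : I → Fin Ns) (β : Fin Ns → Fin σ → ZMod p)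
    (hβ : Function.Injective β)
    (hbits : ∀ u k, β u k = 0 ∨ β u k = 1)
    (E : I → ZMod p) (c : I → Fin Ns → ZMod p)
    (hc : ∀ i u, c i u =
      1 - (List.finRange σ).foldl
        (fun acc k =>
          acc + (β (s i) k + β u k - 2 * β (s i) k * β u k)
            - acc * (β (s i) k + β u k - 2 * β (s i) k * β u k)) 0) :
    ∀ u : Fin Ns,
      ∑ i : I, c i u * E i = ∑ i ∈ Finset.univ.filter (fun i => s i = u), E i := by
  intro u
  have hcu : ∀ i, c i u = if s i = u then 1 else 0 := fun i => by
    rw [hc, ← equalityCircuit, one_sub_equalityCircuit (hbits _) (hbits _)]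
    exact if_congr hβ.eq_iff rfl rfl
  simp only [Finset.sum_filter, hcu, ite_mul, one_mul, zero_mul]

theorem naa_aggregation_correct (p : ℕ) (hp : p.Prime) (hp2 : 2 < p)
    (I : Type*) [Fintype I] (Ns σ : ℕ) (hNs : 0 < Ns) (hσ : 0 < σ)
    (s : I → Fin Ns) (β : Fin Ns → Fin σ → ZMod p)
    (hβ : Function.Injective β)
    (hbits : ∀ u k, β u k = 0 ∨ β u k = 1)
    (E : I → ZMod p) (c : I → Fin Ns → ZMod p)
    (hc : ∀ i u, c i u =
      1 - (List.finRange σ).foldl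
        (fun acc k =>
          acc + (β (s i) k + β u k - 2 * β (s i) k * β u k)
            - acc * (β (s i) k + β u k - 2 * β (s i) k * β u k)) 0) :
    ∀ u : Fin Ns,
      ∑ i : I, c i u * E i = ∑ i ∈ Finset.univ.filter (fun i => s i = u), E i :=
  naa_aggregation_correct_general p I Ns σ s β hβ hbits E c hc
end
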